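/- For every θ ∈ ℝ^K, if k is an action maximizing π_θ over {1,…,K}, then the one-step expected squared norm of the stochastic gradient satisfies Σ_{a₀=1}^K π_θ(a₀) · ∫ ‖g(θ, a₀, x)‖₂² dP_{a₀}(x) ≤ 4·R_max²·(1 − π_θ(k)). -/

import Mathlib

/-! With `p = π_θ`, the stochastic gradient is `(e_{a₀} - p) · x`, so its squared norm is
`‖e_{a₀} - p‖² x² ≤ ‖e_{a₀} - p‖² R_max²`. Averaging `‖e_{a₀} - p‖² = 1 - 2 p(a₀) + ‖p‖²` over
`a₀ ∼ p` gives `1 - ‖p‖² ≤ 1 - p(k)² = (1 - p(k)) (1 + p(k)) ≤ 2 (1 - p(k))`. -/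

open MeasureTheory Finset Real

/-- Softmax policy. -/
noncomputable def softmax {K : ℕ} (θ : Fin K → ℝ) (a : Fin K) : ℝ :=
  Real.exp (θ a) / ∑ a' : Fin K, Real.exp (θ a')

/-- Stochastic gradient. -/
noncomputable def sgrad {K : ℕ} (θ : Fin K → ℝ) (a₀ : Fin K) (x : ℝ) (a : Fin K) : ℝ :=
  ((if a = a₀ then (1 : ℝ) else 0) - softmax θ a) * x

/-- Euclidean norm on `ℝ^K`. -/
noncomputable def norm2 {K : ℕ} (v : Fin K → ℝ) : ℝ :=
  Real.sqrt (∑ a : Fin K, (v a) ^ 2)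

section

variable {ι : Type*} [Fintype ι]

theorem sum_sq_ite_sub [DecidableEq ι] (p : ι → ℝ) (a₀ : ι) :
    ∑ a, ((if a = a₀ then (1 : ℝ) else 0) - p a) ^ 2 = 1 - 2 * p a₀ + ∑ a, p a ^ 2 := by
  have h : ∀ a, ((if a = a₀ then (1 : ℝ) else 0) - p a) ^ 2
      = (if a = a₀ then 1 - 2 * p a₀ else 0) + p a ^ 2 := by
    intro a
    split_ifs with ha
    · subst ha; ring
    · ring
  simp only [h, sum_add_distrib, sum_ite_eq', mem_univ, if_true]

theorem sum_mul_sum_sq_ite_sub [DecidableEq ι] {p : ι → ℝ} (hp : ∑ a, p a = 1) :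
    ∑ a₀, p a₀ * ∑ a, ((if a = a₀ then (1 : ℝ) else 0) - p a) ^ 2 = 1 - ∑ a, p a ^ 2 := by
  simp only [sum_sq_ite_sub, mul_add, mul_sub, sum_add_distrib, sum_sub_distrib, ← sum_mul,
    mul_one, hp]
  simp only [mul_left_comm _ (2 : ℝ), ← mul_sum, ← sq]
  ring

theorem one_sub_sum_sq_le (p : ι → ℝ) (k : ι) :
    1 - ∑ a, p a ^ 2 ≤ 2 * (1 - p k) := by
  have hk : p k ^ 2 ≤ ∑ a, p a ^ 2 := single_le_sum (fun a _ => sq_nonneg (p a)) (mem_univ k)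
  nlinarith [sq_nonneg (1 - p k)]

end

section

variable {K : ℕ} (θ : Fin K → ℝ)

theorem softmax_nonneg (a : Fin K) : 0 ≤ softmax θ a :=
  div_nonneg (exp_pos _).le (sum_nonneg fun _ _ => (exp_pos _).le)

theorem sum_softmax [NeZero K] : ∑ a, softmax θ a = 1 := by
  have hZ : (0 : ℝ) < ∑ a, exp (θ a) := sum_pos (fun _ _ => exp_pos _) univ_nonempty
  simp only [softmax]
  rw [← sum_div, div_self hZ.ne']

theorem softmax_le_one [NeZero K] (a : Fin K) : softmax θ a ≤ 1 :=
  sum_softmax θ ▸ single_le_sum (fun b _ => softmax_nonneg θ b) (mem_univ a)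

theorem norm2_sgrad_sq (a₀ : Fin K) (x : ℝ) :
    norm2 (sgrad θ a₀ x) ^ 2
      = (∑ a, ((if a = a₀ then (1 : ℝ) else 0) - softmax θ a) ^ 2) * x ^ 2 := by
  rw [norm2, sq_sqrt (sum_nonneg fun _ _ => sq_nonneg _), sum_mul]
  simp only [sgrad, mul_pow]

end

theorem integral_sq_le_of_ae_mem_Icc {μ : Measure ℝ} [IsProbabilityMeasure μ] {R : ℝ}
    (h : ∀ᵐ x ∂μ, x ∈ Set.Icc (-R) R) : ∫ x, x ^ 2 ∂μ ≤ R ^ 2 := by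
  calc ∫ x, x ^ 2 ∂μ ≤ ∫ _, R ^ 2 ∂μ :=
        integral_mono_of_nonneg (ae_of_all _ sq_nonneg) (integrable_const _)
          (h.mono fun x hx => sq_le_sq' hx.1 hx.2)
    _ = R ^ 2 := by simp

theorem stochastic_gradient_scale_maximizer_bound_general
    (K : ℕ) (Rmax : ℝ)
    (P : Fin K → Measure ℝ) (hprob : ∀ a, IsProbabilityMeasure (P a))
    (hsupp : ∀ a, ∀ᵐ x ∂(P a), x ∈ Set.Icc (-Rmax) Rmax)
    (θ : Fin K → ℝ) (k : Fin K) :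
    ∑ a₀ : Fin K, softmax θ a₀ * ∫ x, (norm2 (sgrad θ a₀ x)) ^ 2 ∂(P a₀)
      ≤ 4 * Rmax ^ 2 * (1 - softmax θ k) := by
  have : NeZero K := ⟨k.pos.ne'⟩
  set C : Fin K → ℝ := fun a₀ => ∑ a, ((if a = a₀ then (1 : ℝ) else 0) - softmax θ a) ^ 2
  have hgrad : ∀ a₀, ∫ x, norm2 (sgrad θ a₀ x) ^ 2 ∂(P a₀) ≤ C a₀ * Rmax ^ 2 := fun a₀ => by
    have := hprob a₀
    simp only [norm2_sgrad_sq, integral_const_mul]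
    exact mul_le_mul_of_nonneg_left (integral_sq_le_of_ae_mem_Icc (hsupp a₀)) (by positivity)
  calc ∑ a₀, softmax θ a₀ * ∫ x, norm2 (sgrad θ a₀ x) ^ 2 ∂(P a₀)
      ≤ ∑ a₀, softmax θ a₀ * C a₀ * Rmax ^ 2 := sum_le_sum fun a₀ _ => by
        rw [mul_assoc]; exact mul_le_mul_of_nonneg_left (hgrad a₀) (softmax_nonneg θ a₀)
    _ = (1 - ∑ a, softmax θ a ^ 2) * Rmax ^ 2 := by
        rw [← sum_mul, sum_mul_sum_sq_ite_sub (sum_softmax θ)]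
    _ ≤ 2 * (1 - softmax θ k) * Rmax ^ 2 :=
        mul_le_mul_of_nonneg_right (one_sub_sum_sq_le (softmax θ) k) (sq_nonneg _)
    _ ≤ 4 * Rmax ^ 2 * (1 - softmax θ k) := by
        nlinarith [softmax_le_one θ k, sq_nonneg Rmax]

/-- If `k` maximizes `π_θ`, the one-step expected squared norm of the stochastic gradient is
bounded by `4 R_max² (1 − π_θ(k))`. -/
theorem stochastic_gradient_scale_maximizer_bound
    (K : ℕ) (hK : 2 ≤ K) (Rmax : ℝ) (hRmax : 0 < Rmax)
    (P : Fin K → Measure ℝ) (hprob : ∀ a, IsProbabilityMeasure (P a))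
    (hsupp : ∀ a, ∀ᵐ x ∂(P a), x ∈ Set.Icc (-Rmax) Rmax)
    (θ : Fin K → ℝ) (k : Fin K) (hk : ∀ a, softmax θ a ≤ softmax θ k) :
    ∑ a₀ : Fin K, softmax θ a₀ * ∫ x, (norm2 (sgrad θ a₀ x)) ^ 2 ∂(P a₀)
      ≤ 4 * Rmax ^ 2 * (1 - softmax θ k) :=
  stochastic_gradient_scale_maximizer_bound_general K Rmax P hprob hsupp θ k
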